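/- arXiv:1412.0216 — 4 statements merged into one kernel-verified Lean document; each statement's English description precedes it below -/
import Mathlib

section
/- For positive integers n and k, the following variant of the Chu-Vandermonde identity holds: the sum over ℓ from 0 to n of C(n+1, ℓ+1)·C(k-1, ℓ)·C(ℓ+1, 2) equals (n(n+1)/2)·C(n+k-2, n). -/
/-!
Since `C(n+2, ℓ+2) · C(ℓ+2, 2) = C(n+2, 2) · C(n, ℓ)` (choose the pair first, then the rest),
the factor `C(n+1, 2) = n(n+1)/2` comes out of the sum, and what remains,
`∑ C(n-1, ℓ) · C(k-1, ℓ+1)`, is Vandermonde's identity for `C(n+k-2, n)`.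
-/

open Finset

namespace Nat

theorem sum_range_choose_mul_choose_succ (p m : ℕ) :
    ∑ i ∈ range (p + 1), p.choose i * m.choose (i + 1) = (p + m).choose (p + 1) := by
  calc ∑ i ∈ range (p + 1), p.choose i * m.choose (i + 1)
      = ∑ ij ∈ antidiagonal p, p.choose ij.1 * m.choose (ij.1 + 1) :=
        (Finset.Nat.sum_antidiagonal_eq_sum_range_succ_mk
          (fun ij => p.choose ij.1 * m.choose (ij.1 + 1)) p).symm
    _ = ∑ ij ∈ antidiagonal p, m.choose (ij.1 + 1) * p.choose ij.2 := by
        refine Finset.sum_congr rfl fun ij hij => ?_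
        rw [choose_symm_of_eq_add (mem_antidiagonal.1 hij).symm, Nat.mul_comm]
    _ = ∑ ij ∈ antidiagonal (p + 1), m.choose ij.1 * p.choose ij.2 := by
        rw [Finset.Nat.sum_antidiagonal_succ, choose_succ_self, Nat.mul_zero, Nat.zero_add]
    _ = (p + m).choose (p + 1) := by rw [← add_choose_eq, Nat.add_comm]

theorem choose_add_two_mul_choose_two (n i : ℕ) :
    (n + 2).choose (i + 2) * (i + 2).choose 2 = (n + 2).choose 2 * n.choose i := by
  simpa using choose_mul (n := n + 2) (k := i + 2) (s := 2) (by omega)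

theorem sum_range_choose_mul_choose_mul_choose_two (n m : ℕ) :
    ∑ ℓ ∈ range (n + 2), (n + 2).choose (ℓ + 1) * m.choose ℓ * (ℓ + 1).choose 2
      = (n + 2).choose 2 * (n + m).choose (n + 1) := by
  rw [sum_range_succ', ← sum_range_choose_mul_choose_succ n m, mul_sum, Nat.zero_add,
    choose_eq_zero_of_lt one_lt_two, Nat.mul_zero, Nat.add_zero]
  refine Finset.sum_congr rfl fun i _ => ?_
  rw [Nat.mul_right_comm, choose_add_two_mul_choose_two, Nat.mul_assoc]

end Nat

/-- Variant of the Chu-Vandermonde identity: for positive integers `n` and `k`,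
`∑_{ℓ=0}^{n} C(n+1, ℓ+1) · C(k-1, ℓ) · C(ℓ+1, 2) = (n(n+1)/2) · C(n+k-2, n)`. -/
theorem chu_vandermonde_variant (n k : ℕ) (hn : 0 < n) (hk : 0 < k) :
    ∑ ℓ ∈ Finset.range (n + 1),
        (n + 1).choose (ℓ + 1) * (k - 1).choose ℓ * (ℓ + 1).choose 2
      = n * (n + 1) / 2 * (n + k - 2).choose n := by
  obtain ⟨p, rfl⟩ : ∃ p, n = p + 1 := ⟨n - 1, by omega⟩
  obtain ⟨m, rfl⟩ : ∃ m, k = m + 1 := ⟨k - 1, by omega⟩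
  rw [Nat.add_sub_cancel, show p + 1 + (m + 1) - 2 = p + m by omega,
    Nat.sum_range_choose_mul_choose_mul_choose_two, Nat.choose_two_right, Nat.mul_comm (p + 1)]
  rfl
end

section
/- For positive integers n, k with n ≥ 1, the sum over ℓ from 0 to n-1 of C(n+1, ℓ+1)·((n-ℓ)(n+ℓ+1)/2)·C(n+k-2, ℓ) equals (n(n+1)/2)·(C(k+2n-1, n) - C(k+2n-3, n)). -/
/-!
Write `m = n + k - 2`. Since `(n - ℓ)(n + ℓ + 1) = n(n + 1) - ℓ(ℓ + 1)` and
`ℓ(ℓ + 1) C(n + 1, ℓ + 1) = n(n + 1) C(n - 1, ℓ - 1)`, twice the sum is `n(n + 1)` times the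
difference of two Vandermonde convolutions, `∑ C(n + 1, ℓ + 1) C(m, ℓ) = C(n + 1 + m, n)` and
`∑ C(n - 1, ℓ - 1) C(m, ℓ) = C(n - 1 + m, n)`.
-/

open Finset

namespace Nat

theorem sum_range_choose_add_one_mul_choose (n m : ℕ) :
    ∑ ℓ ∈ range (n + 1), (n + 1).choose (ℓ + 1) * m.choose ℓ = (n + 1 + m).choose n := by
  rw [add_comm (n + 1), add_choose_eq, Nat.sum_antidiagonal_eq_sum_range_succ
    (fun i j => m.choose i * (n + 1).choose j)]
  refine sum_congr rfl fun ℓ hℓ => ?_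
  rw [mul_comm, choose_symm_of_eq_add (by grind : n + 1 = (n - ℓ) + (ℓ + 1))]

theorem sum_range_choose_mul_choose_add_one (n m : ℕ) :
    ∑ j ∈ range (n + 1), n.choose j * m.choose (j + 1) = (n + m).choose (n + 1) := by
  rw [add_comm n m, add_choose_eq, Nat.sum_antidiagonal_succ,
    Nat.sum_antidiagonal_eq_sum_range_succ (fun i j => m.choose (i + 1) * n.choose j)]
  simp only [choose_succ_self, mul_zero, zero_add]
  refine sum_congr rfl fun j hj => ?_
  rw [mul_comm, choose_symm (by grind)]

theorem add_one_mul_add_two_mul_choose (n j : ℕ) :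
    (j + 1) * (j + 2) * (n + 2).choose (j + 2) = (n + 1) * (n + 2) * n.choose j := by
  have h₁ := add_one_mul_choose_eq n j
  have h₂ := add_one_mul_choose_eq (n + 1) (j + 1)
  calc (j + 1) * (j + 2) * (n + 2).choose (j + 2)
      = (j + 1) * ((n + 2) * (n + 1).choose (j + 1)) := by rw [h₂]; ring
    _ = (n + 2) * ((n + 1).choose (j + 1) * (j + 1)) := by ring
    _ = (n + 1) * (n + 2) * n.choose j := by rw [← h₁]; ring

theorem sum_range_mul_add_one_mul_choose_mul_choose (n m : ℕ) :
    ∑ ℓ ∈ range (n + 1), ℓ * (ℓ + 1) * (n + 1).choose (ℓ + 1) * m.choose ℓ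
      = n * (n + 1) * (n - 1 + m).choose n := by
  cases n with
  | zero => simp
  | succ n =>
    rw [sum_range_succ', add_tsub_cancel_right, ← sum_range_choose_mul_choose_add_one, mul_sum]
    simp only [zero_mul, add_zero]
    refine sum_congr rfl fun j _ => ?_
    rw [add_assoc j 1 1, add_assoc n 1 1, add_one_mul_add_two_mul_choose]
    ring

theorem two_dvd_sub_mul_add_add_one (n ℓ : ℕ) : 2 ∣ (n - ℓ) * (n + ℓ + 1) := by
  rw [← even_iff_two_dvd, even_mul]
  rcases even_or_odd (n - ℓ) with h | ⟨c, hc⟩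
  · exact Or.inl h
  · exact Or.inr ⟨c + ℓ + 1, by omega⟩

theorem sum_range_choose_mul_sub_mul_choose_add (n m : ℕ) :
    ∑ ℓ ∈ range n, (n + 1).choose (ℓ + 1) * ((n - ℓ) * (n + ℓ + 1)) * m.choose ℓ
      + n * (n + 1) * (n - 1 + m).choose n = n * (n + 1) * (n + 1 + m).choose n := by
  have h_extend : ∑ ℓ ∈ range n, (n + 1).choose (ℓ + 1) * ((n - ℓ) * (n + ℓ + 1)) * m.choose ℓ
      = ∑ ℓ ∈ range (n + 1), (n + 1).choose (ℓ + 1) * ((n - ℓ) * (n + ℓ + 1)) * m.choose ℓ := by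
    simp [sum_range_succ]
  rw [h_extend, ← sum_range_mul_add_one_mul_choose_mul_choose, ← sum_add_distrib,
    ← sum_range_choose_add_one_mul_choose, mul_sum]
  refine sum_congr rfl fun ℓ hℓ => ?_
  have h_split : (n - ℓ) * (n + ℓ + 1) + ℓ * (ℓ + 1) = n * (n + 1) := by
    obtain ⟨d, rfl⟩ := Nat.exists_eq_add_of_le (Nat.lt_succ_iff.mp (mem_range.mp hℓ))
    rw [add_tsub_cancel_left]
    ring
  rw [← h_split]
  ring

end Nat

theorem dof_count_boundary_general (n k : ℕ) (hk : 0 < k) :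
    ∑ ℓ ∈ Finset.range n,
        (n + 1).choose (ℓ + 1) * ((n - ℓ) * (n + ℓ + 1) / 2) * (n + k - 2).choose ℓ
      = n * (n + 1) / 2 * ((k + 2 * n - 1).choose n - (k + 2 * n - 3).choose n) := by
  rcases Nat.eq_zero_or_pos n with rfl | hn
  · simp
  have key := Nat.sum_range_choose_mul_sub_mul_choose_add n (n + k - 2)
  rw [show n - 1 + (n + k - 2) = k + 2 * n - 3 by omega,
    show n + 1 + (n + k - 2) = k + 2 * n - 1 by omega] at key
  apply Nat.eq_of_mul_eq_mul_left two_pos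
  rw [mul_sum, ← mul_assoc, Nat.mul_div_cancel' (Nat.even_mul_succ_self n).two_dvd, Nat.mul_sub]
  have h_term (ℓ : ℕ) : 2 * ((n + 1).choose (ℓ + 1) * ((n - ℓ) * (n + ℓ + 1) / 2)
      * (n + k - 2).choose ℓ) = (n + 1).choose (ℓ + 1) * ((n - ℓ) * (n + ℓ + 1))
      * (n + k - 2).choose ℓ := by
    obtain ⟨q, hq⟩ := Nat.two_dvd_sub_mul_add_add_one n ℓ
    rw [hq, Nat.mul_div_cancel_left q two_pos]
    ring
  simp only [h_term]
  omega

/-- For positive integers `n`, `k`, the sum over `ℓ` from `0` to `n-1` of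
`C(n+1, ℓ+1) · ((n-ℓ)(n+ℓ+1)/2) · C(n+k-2, ℓ)` equals
`(n(n+1)/2) · (C(k+2n-1, n) - C(k+2n-3, n))`. -/
theorem dof_count_boundary (n k : ℕ) (hn : 1 ≤ n) (hk : 0 < k) :
    ∑ ℓ ∈ Finset.range n,
        (n + 1).choose (ℓ + 1) * ((n - ℓ) * (n + ℓ + 1) / 2) * (n + k - 2).choose ℓ
      = n * (n + 1) / 2 * ((k + 2 * n - 1).choose n - (k + 2 * n - 3).choose n) :=
  dof_count_boundary_general n k hk
end

section
/- Let x₀, x₁, ..., xₙ be n+1 points in ℝⁿ in general position (i.e., the vectors x₁ - x₀, ..., xₙ - x₀ are linearly independent). For each pair 0 ≤ i < j ≤ n, let t_{i,j} = xⱼ - xᵢ be the edge vector and T_{i,j} = t_{i,j} t_{i,j}ᵀ the associated rank-one symmetric matrix. Then the n(n+1)/2 symmetric matrices T_{i,j} are linearly independent and form a basis of the space 𝕊 of symmetric n×n real matrices. -/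
/-
The edge vectors `x (c + 1) - x 0` are the columns of an invertible matrix `P`, and
`x j - x i = P (u j - u i)` for the vertices `u = 0, e₁, …, eₙ` of the standard simplex. Hence the
congruence `A ↦ P A Pᵀ`, an automorphism of the matrix space preserving symmetric matrices, maps
the edge tensors of `u` onto the `T_{i,j}`, and it suffices to treat the standard simplex. There
`T_{0,c} = E_cc` and `T_{a,c} = E_aa + E_cc - E_ac - E_ca`: in a vanishing combination the
off-diagonal entries kill the coefficients of the `T_{a,c}`, and then the diagonal entries kill
those of the `T_{0,c}`; conversely polarization puts every `E_ac + E_ca` in the span.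
-/

/-- The subspace of symmetric `n × n` real matrices. -/
def symMatrixSubspace (n : ℕ) : Submodule ℝ (Matrix (Fin n) (Fin n) ℝ) where
  carrier := {A | A.IsSymm}
  add_mem' := by
    intro A B hA hB
    simp only [Set.mem_setOf_eq, Matrix.IsSymm] at *
    simp [Matrix.transpose_add, hA, hB]
  zero_mem' := by simp [Matrix.IsSymm]
  smul_mem' := by
    intro c A hA
    simp only [Set.mem_setOf_eq, Matrix.IsSymm] at *
    simp [Matrix.transpose_smul, hA]

open Matrix

section Congruence

variable {m n R : Type*} [Fintype n] [CommRing R]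

def congruence (P : Matrix m n R) : Matrix n n R →ₗ[R] Matrix m m R where
  toFun A := P * A * Pᵀ
  map_add' A B := by rw [Matrix.mul_add, Matrix.add_mul]
  map_smul' r A := by rw [Matrix.mul_smul, Matrix.smul_mul]; rfl

theorem congruence_apply (P : Matrix m n R) (A : Matrix n n R) :
    congruence P A = P * A * Pᵀ := rfl

theorem congruence_vecMulVec (P : Matrix m n R) (v w : n → R) :
    congruence P (vecMulVec v w) = vecMulVec (P *ᵥ v) (P *ᵥ w) := by
  rw [congruence_apply, mul_vecMulVec, vecMulVec_mul, vecMul_transpose]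

theorem congruence_congruence [Fintype m] {l : Type*} (Q : Matrix l m R) (P : Matrix m n R)
    (A : Matrix n n R) : congruence Q (congruence P A) = congruence (Q * P) A := by
  simp only [congruence_apply, transpose_mul, Matrix.mul_assoc]

theorem Matrix.IsSymm.congruence {A : Matrix n n R} (hA : A.IsSymm) (P : Matrix m n R) :
    (congruence P A).IsSymm := by
  rw [IsSymm, congruence_apply, transpose_mul, transpose_mul, transpose_transpose, hA.eq,
    Matrix.mul_assoc]

theorem congruence_one [DecidableEq n] (A : Matrix n n R) : congruence 1 A = A := by
  rw [congruence_apply, Matrix.one_mul, transpose_one, Matrix.mul_one]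

theorem congruence_injective [DecidableEq n] {P : Matrix n n R} (hP : IsUnit P) :
    Function.Injective (congruence P) :=
  Function.LeftInverse.injective (g := congruence (↑hP.unit⁻¹ : Matrix n n R)) fun A => by
    rw [congruence_congruence, hP.val_inv_mul, congruence_one]

end Congruence

theorem map_congruence_symMatrixSubspace {n : ℕ} {P : Matrix (Fin n) (Fin n) ℝ} (hP : IsUnit P) :
    (symMatrixSubspace n).map (congruence P) = symMatrixSubspace n := by
  refine le_antisymm (Submodule.map_le_iff_le_comap.mpr fun A hA => hA.congruence P)
    fun A hA => ⟨congruence (↑hP.unit⁻¹ : Matrix (Fin n) (Fin n) ℝ) A, hA.congruence _, ?_⟩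
  rw [congruence_congruence, hP.mul_val_inv, congruence_one]

section EdgeTensor

variable {ι m R : Type*} [CommRing R]

def edgeTensor [LT ι] (v : ι → m → R) (p : {p : ι × ι // p.1 < p.2}) : Matrix m m R :=
  vecMulVec (v p.1.2 - v p.1.1) (v p.1.2 - v p.1.1)

theorem isSymm_edgeTensor [LT ι] (v : ι → m → R) (p : {p : ι × ι // p.1 < p.2}) :
    (edgeTensor v p).IsSymm :=
  transpose_vecMulVec _ _

theorem edgeTensor_mulVec_add [LT ι] {n : Type*} [Fintype n] (P : Matrix m n R) (v : ι → n → R)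
    (c : m → R) : edgeTensor (fun i => P *ᵥ v i + c) = congruence P ∘ edgeTensor v := by
  funext p
  simp only [edgeTensor, Function.comp_apply, congruence_vecMulVec, mulVec_sub,
    add_sub_add_right_eq_sub]

theorem vecMulVec_sub_self_mem_span_edgeTensor [LinearOrder ι] (v : ι → m → R) (i j : ι) :
    vecMulVec (v j - v i) (v j - v i) ∈ Submodule.span R (Set.range (edgeTensor v)) := by
  rcases lt_trichotomy i j with hij | rfl | hji
  · exact Submodule.subset_span ⟨⟨(i, j), hij⟩, rfl⟩
  · simp
  · rw [← neg_sub, neg_vecMulVec, vecMulVec_neg, neg_neg]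
    exact Submodule.subset_span ⟨⟨(j, i), hji⟩, rfl⟩

theorem vecMulVec_add_vecMulVec_swap (v w : m → R) :
    vecMulVec v w + vecMulVec w v = vecMulVec v v + vecMulVec w w - vecMulVec (w - v) (w - v) := by
  simp only [vecMulVec_sub, sub_vecMulVec]
  abel

end EdgeTensor

def simplexVertex (n : ℕ) : Fin (n + 1) → Fin n → ℝ :=
  Fin.cons 0 fun c => Pi.single c 1

theorem simplexVertex_apply {n : ℕ} (i : Fin (n + 1)) (a : Fin n) :
    simplexVertex n i a = if i = a.succ then 1 else 0 := by
  cases i using Fin.cases with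
  | zero => simp [simplexVertex, (Fin.succ_ne_zero a).symm]
  | succ c => simp [simplexVertex, Pi.single_apply, eq_comm]

theorem Fin.lt_pair_cases {n : ℕ} {P : {p : Fin (n + 1) × Fin (n + 1) // p.1 < p.2} → Prop}
    (base : ∀ c : Fin n, P ⟨(0, c.succ), c.succ_pos⟩)
    (interior : ∀ (a c : Fin n) (h : a < c), P ⟨(a.succ, c.succ), Fin.succ_lt_succ_iff.mpr h⟩) :
    ∀ p, P p := by
  rintro ⟨⟨i, j⟩, hij⟩
  cases j using Fin.cases with
  | zero => exact absurd hij (Fin.not_lt_zero i)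
  | succ c =>
    cases i using Fin.cases with
    | zero => exact base c
    | succ a => exact interior a c (Fin.succ_lt_succ_iff.mp hij)

theorem edgeTensor_simplexVertex_apply {n : ℕ} (p : {p : Fin (n + 1) × Fin (n + 1) // p.1 < p.2})
    (a c : Fin n) : edgeTensor (simplexVertex n) p a c =
      ((if p.1.2 = a.succ then 1 else 0) - if p.1.1 = a.succ then 1 else 0) *
        ((if p.1.2 = c.succ then 1 else 0) - if p.1.1 = c.succ then 1 else 0) := by
  simp only [edgeTensor, vecMulVec_apply, Pi.sub_apply, simplexVertex_apply]

theorem edgeTensor_simplexVertex_apply_of_lt {n : ℕ}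
    (p : {p : Fin (n + 1) × Fin (n + 1) // p.1 < p.2}) {a c : Fin n} (h : a < c) :
    edgeTensor (simplexVertex n) p a c =
      if p = ⟨(a.succ, c.succ), Fin.succ_lt_succ_iff.mpr h⟩ then -1 else 0 := by
  obtain ⟨⟨i, j⟩, hij⟩ := p
  rw [edgeTensor_simplexVertex_apply]
  simp only [Subtype.mk.injEq, Prod.mk.injEq, Fin.ext_iff, Fin.val_succ]
  rw [Fin.lt_def] at h hij
  split_ifs <;> simp_all <;> omega

theorem edgeTensor_simplexVertex_apply_self_of_fst_eq_zero {n : ℕ}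
    (p : {p : Fin (n + 1) × Fin (n + 1) // p.1 < p.2}) (hp : p.1.1 = 0) (c : Fin n) :
    edgeTensor (simplexVertex n) p c c = if p.1.2 = c.succ then 1 else 0 := by
  rw [edgeTensor_simplexVertex_apply, hp, if_neg (Fin.succ_ne_zero c).symm]
  split_ifs <;> norm_num

theorem linearIndependent_edgeTensor_simplexVertex (n : ℕ) :
    LinearIndependent ℝ (edgeTensor (simplexVertex n)) := by
  rw [Fintype.linearIndependent_iff]
  intro g hg
  have hentry : ∀ a c, ∑ p, g p * edgeTensor (simplexVertex n) p a c = 0 := fun a c => by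
    simpa [Matrix.sum_apply] using congrFun (congrFun hg a) c
  -- the entry `(a, c)` with `a < c` only sees the edge between vertices `a + 1` and `c + 1`
  have interior : ∀ (a c : Fin n) (h : a < c),
      g ⟨(a.succ, c.succ), Fin.succ_lt_succ_iff.mpr h⟩ = 0 := fun a c h => by
    simpa [edgeTensor_simplexVertex_apply_of_lt _ h] using hentry a c
  -- once those vanish, the diagonal entry `(c, c)` only sees the edge from `0` to `c + 1`
  refine Fin.lt_pair_cases (fun c => ?_) interior
  rw [← hentry c c, Finset.sum_eq_single ⟨(0, c.succ), c.succ_pos⟩]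
  · rw [edgeTensor_simplexVertex_apply_self_of_fst_eq_zero _ rfl, if_pos rfl, mul_one]
  · refine Fin.lt_pair_cases (fun k _ hk => ?_) (fun a k h _ _ => by rw [interior a k h, zero_mul])
    rw [edgeTensor_simplexVertex_apply_self_of_fst_eq_zero _ rfl, if_neg, mul_zero]
    exact fun h => hk (by rw [Fin.succ_inj.mp h])
  · simp

theorem single_add_single_mem_span_edgeTensor_simplexVertex {n : ℕ} (a c : Fin n) :
    single a c (1 : ℝ) + single c a 1 ∈
      Submodule.span ℝ (Set.range (edgeTensor (simplexVertex n))) := by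
  have hv : ∀ b : Fin n, Pi.single b 1 = simplexVertex n b.succ - simplexVertex n 0 := fun b => by
    simp [simplexVertex]
  rw [single_eq_single_vecMulVec_single, single_eq_single_vecMulVec_single,
    vecMulVec_add_vecMulVec_swap, hv a, hv c, sub_sub_sub_cancel_right]
  exact sub_mem (add_mem (vecMulVec_sub_self_mem_span_edgeTensor _ _ _)
    (vecMulVec_sub_self_mem_span_edgeTensor _ _ _)) (vecMulVec_sub_self_mem_span_edgeTensor _ _ _)

theorem span_edgeTensor_simplexVertex (n : ℕ) :
    Submodule.span ℝ (Set.range (edgeTensor (simplexVertex n))) = symMatrixSubspace n := by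
  refine le_antisymm (Submodule.span_le.mpr ?_) fun A hA => ?_
  · rintro _ ⟨p, rfl⟩
    exact isSymm_edgeTensor _ p
  · have hA' : A = ∑ a, ∑ c, (A a c / 2) • (single a c (1 : ℝ) + single c a 1) := by
      ext i j
      simp [Matrix.sum_apply, single_apply, ite_and, Finset.sum_add_distrib, hA.apply i j]
    rw [hA']
    exact Submodule.sum_mem _ fun a _ => Submodule.sum_mem _ fun c _ =>
      Submodule.smul_mem _ _ (single_add_single_mem_span_edgeTensor_simplexVertex a c)

theorem mulVec_simplexVertex_add {n : ℕ} (x : Fin (n + 1) → Fin n → ℝ) (i : Fin (n + 1)) :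
    of (fun a c => x c.succ a - x 0 a) *ᵥ simplexVertex n i + x 0 = x i := by
  cases i using Fin.cases with
  | zero => simp [simplexVertex]
  | succ c =>
    ext a
    simp [simplexVertex]

/-- Let `x₀, …, xₙ` be `n+1` points of `ℝⁿ` in general position. For each pair
`i < j`, let `T_{i,j} = t_{i,j} t_{i,j}ᵀ` with `t_{i,j} = xⱼ - xᵢ`. Then these
`n(n+1)/2` rank-one symmetric matrices are linearly independent and form a basis
of the space of symmetric `n × n` matrices. -/
theorem edge_tensors_basis (n : ℕ) (x : Fin (n + 1) → (Fin n → ℝ))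
    (hx : LinearIndependent ℝ (fun i : Fin n => x i.succ - x 0))
    (T : {p : Fin (n + 1) × Fin (n + 1) // p.1 < p.2} → Matrix (Fin n) (Fin n) ℝ)
    (hT : ∀ p, T p = Matrix.vecMulVec (x p.1.2 - x p.1.1) (x p.1.2 - x p.1.1)) :
    LinearIndependent ℝ T ∧ Submodule.span ℝ (Set.range T) = symMatrixSubspace n := by
  set P : Matrix (Fin n) (Fin n) ℝ := of fun a c => x c.succ a - x 0 a
  have hP : IsUnit P := linearIndependent_cols_iff_isUnit.mp hx
  have hTP : T = congruence P ∘ edgeTensor (simplexVertex n) := by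
    rw [← edgeTensor_mulVec_add P _ (x 0)]
    simp only [P, mulVec_simplexVertex_add]
    exact funext hT
  subst hTP
  refine ⟨(linearIndependent_edgeTensor_simplexVertex n).map' _
    (LinearMap.ker_eq_bot.mpr (congruence_injective hP)), ?_⟩
  rw [Set.range_comp, Submodule.span_image, span_edgeTensor_simplexVertex,
    map_congruence_symMatrixSubspace hP]
end

section
/- Let K be a nondegenerate n-simplex with barycentric coordinates λ₀, ..., λₙ and edge rank-one tensors T_{i,j} for 0 ≤ i < j ≤ n. Then every function in the space Σ_{K,k,b} := Σ_{0≤i<j≤n} λᵢλⱼ P_{k-2}(K; ℝ) T_{i,j} satisfies τν = 0 on the boundary ∂K, where ν is the outward normal of ∂K. -/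
open Matrix

theorem Matrix.sum_smul_vecMulVec_self_mulVec_eq_zero {ι R m : Type*} [CommSemiring R]
    [Fintype m] (s : Finset ι) (c : ι → R) (v : ι → m → R) (w : m → R)
    (h : ∀ i ∈ s, c i = 0 ∨ v i ⬝ᵥ w = 0) :
    (∑ i ∈ s, c i • vecMulVec (v i) (v i)) *ᵥ w = 0 := by
  rw [sum_mulVec]
  refine Finset.sum_eq_zero fun i hi => ?_
  rw [smul_mulVec, vecMulVec_mulVec, op_smul_eq_smul]
  rcases h i hi with hc | hv <;> simp [*]

theorem bubble_space_normal_vanishes_on_boundary_general (n : ℕ)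
    (x : Fin (n + 1) → (Fin n → ℝ))
    (lam : Fin (n + 1) → (Fin n → ℝ) → ℝ)
    (p : Fin (n + 1) → Fin (n + 1) → MvPolynomial (Fin n) ℝ)
    (τ : (Fin n → ℝ) → Matrix (Fin n) (Fin n) ℝ)
    (hτ : ∀ y, τ y = ∑ i : Fin (n + 1), ∑ j : Fin (n + 1),
      (lam i y * lam j y * MvPolynomial.eval y (p i j)) •
        Matrix.vecMulVec (x j - x i) (x j - x i))
    (m : Fin (n + 1)) (y : Fin n → ℝ) (hym : lam m y = 0)
    (ν : Fin n → ℝ) (hν : ∀ i j : Fin (n + 1), i ≠ m → j ≠ m →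
      dotProduct ν (x j - x i) = 0) :
    (τ y).mulVec ν = 0 := by
  rw [hτ, ← Fintype.sum_prod_type', ← Finset.univ_product_univ]
  refine sum_smul_vecMulVec_self_mulVec_eq_zero _ _ _ ν fun ⟨i, j⟩ _ => ?_
  -- Either the bubble factor `λᵢλⱼ` vanishes on the face opposite `xₘ`, or the edge is tangent to it.
  by_cases hi : i = m
  · left; simp [hi, hym]
  by_cases hj : j = m
  · left; simp [hj, hym]
  · right; rw [dotProduct_comm]; exact hν i j hi hj

/-- On a nondegenerate `n`-simplex `K` with barycentric coordinates `λ₀,…,λₙ` and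
edge rank-one tensors `T_{i,j} = (xⱼ-xᵢ)(xⱼ-xᵢ)ᵀ`, every member
`τ = ∑_{i,j} λᵢλⱼ p_{ij} T_{i,j}` of the bubble space `Σ_{K,k,b}` satisfies
`τν = 0` on the boundary `∂K`: at any boundary point `y` (where all `λᵢ(y) ≥ 0`
and `λ_m(y) = 0` for some `m`), `τ(y)ν = 0` for the normal `ν` of the
corresponding face. -/
theorem bubble_space_normal_vanishes_on_boundary (n k : ℕ) (hk : 2 ≤ k)
    (x : Fin (n + 1) → (Fin n → ℝ))
    (hx : LinearIndependent ℝ (fun i : Fin n => x i.succ - x 0))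
    (lam : Fin (n + 1) → (Fin n → ℝ) → ℝ)
    (hlam_bary : ∀ i j, lam i (x j) = if i = j then 1 else 0)
    (hlam_affine : ∀ i, ∃ (c : ℝ) (w : Fin n → ℝ), ∀ y, lam i y = c + ∑ a, w a * y a)
    (p : Fin (n + 1) → Fin (n + 1) → MvPolynomial (Fin n) ℝ)
    (hp : ∀ i j, (p i j).totalDegree ≤ k - 2)
    (τ : (Fin n → ℝ) → Matrix (Fin n) (Fin n) ℝ)
    (hτ : ∀ y, τ y = ∑ i : Fin (n + 1), ∑ j : Fin (n + 1),
      (lam i y * lam j y * MvPolynomial.eval y (p i j)) •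
        Matrix.vecMulVec (x j - x i) (x j - x i))
    (m : Fin (n + 1)) (y : Fin n → ℝ) (hyK : ∀ i, 0 ≤ lam i y) (hym : lam m y = 0)
    (ν : Fin n → ℝ) (hν : ∀ i j : Fin (n + 1), i ≠ m → j ≠ m →
      dotProduct ν (x j - x i) = 0) :
    (τ y).mulVec ν = 0 :=
  bubble_space_normal_vanishes_on_boundary_general n x lam p τ hτ m y hym ν hν
end
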